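/- For k ≥ 3, a strictly balanced word w of length 2k over {a,b} satisfies |ScatFact_k(w)| = k+1 if and only if w ∈ {a^k b^k, b^k a^k}. -/

import Mathlib

def wa : Bool := false
def wb : Bool := true

/-- The set of scattered factors (subsequences) of `w` of length exactly `k`. -/
def ScatFact (k : ℕ) (w : List Bool) : Finset (List Bool) :=
  (w.sublists.filter (fun u => u.length = k)).toFinset

/-!
The map `u ↦ u.count false` sends `ScatFact k w` onto `{0, …, k}`, so the cardinality is at least
`k + 1`, with equality exactly when the map is injective. For a sorted word, scattered factors
with the same letter counts are permutations of each other and sublists of a sorted list, hence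
equal. Otherwise `w` contains both `ba` and `ab`; looking at the number of `b`s before an `a`
of `w` then yields two different factors `bᵖ a bᵏ⁻¹⁻ᵖ`.
-/

open List

namespace List

variable {α : Type*}

theorem replicate_append_cons_replicate_sublist [BEq α] [LawfulBEq α] {a b : α}
    {l₁ l₂ : List α} {p q : ℕ} (hp : p ≤ l₁.count b) (hq : q ≤ l₂.count b) :
    replicate p b ++ a :: replicate q b <+ l₁ ++ a :: l₂ :=
  (replicate_sublist_iff.mpr hp).append ((replicate_sublist_iff.mpr hq).cons_cons a)

theorem exists_eq_append_cons_mem_left_of_pair_sublist {a b : α} {l : List α}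
    (h : [a, b] <+ l) : ∃ l₁ l₂, l = l₁ ++ b :: l₂ ∧ a ∈ l₁ := by
  obtain ⟨r₁, r₂, rfl, ha, hb⟩ := cons_sublist_iff.mp h
  obtain ⟨s, t, rfl⟩ := append_of_mem (singleton_sublist.mp hb)
  exact ⟨r₁ ++ s, t, by simp, mem_append_left s ha⟩

theorem exists_eq_append_cons_mem_right_of_pair_sublist {a b : α} {l : List α}
    (h : [a, b] <+ l) : ∃ l₁ l₂, l = l₁ ++ a :: l₂ ∧ b ∈ l₂ := by
  obtain ⟨r₁, r₂, rfl, ha, hb⟩ := cons_sublist_iff.mp h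
  obtain ⟨s, t, rfl⟩ := append_of_mem ha
  exact ⟨s, t ++ r₂, by simp, mem_append_right t (singleton_sublist.mp hb)⟩

theorem pairwise_replicate_append_replicate {r : α → α → Prop} [Std.Refl r] {x y : α}
    (hr : r x y) (m n : ℕ) : (replicate m x ++ replicate n y).Pairwise r := by
  simp [pairwise_append, pairwise_replicate, hr, refl]

theorem Pairwise.eq_of_perm_of_sublist {r : α → α → Prop} [Std.Antisymm r] {l u v : List α}
    (hl : l.Pairwise r) (hu : u <+ l) (hv : v <+ l) (huv : u ~ v) : u = v :=
  huv.eq_of_pairwise (fun _ _ _ _ => _root_.antisymm) (hl.sublist hu) (hl.sublist hv)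

theorem perm_of_count_false_eq {u v : List Bool} (hlen : u.length = v.length)
    (hfalse : u.count false = v.count false) : u ~ v := by
  have htrue : u.count true = v.count true := by
    have := count_false_add_count_true u
    have := count_false_add_count_true v
    omega
  exact perm_iff_count.mpr fun | false => hfalse | true => htrue

end List

theorem mem_scatFact {k : ℕ} {w u : List Bool} :
    u ∈ ScatFact k w ↔ u <+ w ∧ u.length = k := by
  simp [ScatFact]

theorem image_count_false_scatFact {k : ℕ} {w : List Bool}
    (hfalse : w.count false = k) (htrue : w.count true = k) :
    (ScatFact k w).image (count false) = Finset.range (k + 1) := by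
  ext i
  simp only [Finset.mem_image, Finset.mem_range, mem_scatFact]
  constructor
  · rintro ⟨u, ⟨-, rfl⟩, rfl⟩
    exact Nat.lt_succ_of_le (count_le_length ..)
  · intro hi
    obtain ⟨u, hperm, hsub⟩ : replicate i false ++ replicate (k - i) true <+~ w := by
      refine subperm_ext_iff.mpr fun x _ => ?_
      cases x <;> simp [count_replicate, hfalse, htrue, Nat.le_of_lt_succ hi]
    refine ⟨u, ⟨hsub, ?_⟩, ?_⟩
    · rw [hperm.length_eq, length_append, length_replicate, length_replicate]; omega
    · simp [hperm.count_eq, count_replicate]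

theorem injOn_count_false_scatFact_of_pairwise {r : Bool → Bool → Prop} [Std.Antisymm r]
    {k : ℕ} {w : List Bool} (hw : w.Pairwise r) :
    Set.InjOn (count false) (ScatFact k w) := by
  intro u hu v hv huv
  rw [Finset.mem_coe, mem_scatFact] at hu hv
  exact hw.eq_of_perm_of_sublist hu.1 hv.1 (perm_of_count_false_eq (hu.2.trans hv.2.symm) huv)

theorem eq_replicate_append_replicate_of_pairwise {r : Bool → Bool → Prop} [Std.Refl r]
    [Std.Antisymm r] {x : Bool} (hr : r x !x) {k : ℕ} {w : List Bool}
    (hw : w.Pairwise r) (hx : w.count x = k) (hnx : w.count (!x) = k) :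
    w = replicate k x ++ replicate k !x := by
  refine (perm_iff_count.mpr fun y => ?_).eq_of_pairwise (fun _ _ _ _ => antisymm) hw
    (pairwise_replicate_append_replicate hr k k)
  cases x <;> cases y <;> simp_all [count_replicate]

theorem pair_sublists_of_ne_replicate_append_replicate {k : ℕ} {w : List Bool}
    (hfalse : w.count false = k) (htrue : w.count true = k)
    (h₁ : w ≠ replicate k false ++ replicate k true)
    (h₂ : w ≠ replicate k true ++ replicate k false) :
    [true, false] <+ w ∧ [false, true] <+ w := by
  constructor
  · by_contra h
    refine h₁ (eq_replicate_append_replicate_of_pairwise (r := (· ≤ ·)) (by decide)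
      (pairwise_iff_forall_sublist.mpr fun {a b} hab => ?_) hfalse htrue)
    cases a <;> cases b <;> simp_all
  · by_contra h
    refine h₂ (eq_replicate_append_replicate_of_pairwise (r := (· ≥ ·)) (by decide)
      (pairwise_iff_forall_sublist.mpr fun {a b} hab => ?_) htrue hfalse)
    cases a <;> cases b <;> simp_all

theorem exists_two_sublists_count_false_eq_one {k : ℕ} (hk : 2 ≤ k) {w : List Bool}
    (htrue : w.count true = k) (htf : [true, false] <+ w) (hft : [false, true] <+ w) :
    ∃ p q, p < q ∧ q < k ∧ replicate p true ++ false :: replicate (k - 1 - p) true <+ w ∧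
      replicate q true ++ false :: replicate (k - 1 - q) true <+ w := by
  -- A `false` with `x` letters `true` before it lies under the factors with `p ∈ {x - 1, x}`.
  obtain ⟨w₁, w₂, rfl, hw₁⟩ := exists_eq_append_cons_mem_left_of_pair_sublist htf
  have hw₁ := count_pos_iff.mpr hw₁
  have hsplit : w₁.count true + w₂.count true = k := by simpa using htrue
  by_cases hlt : w₁.count true < k
  · exact ⟨w₁.count true - 1, w₁.count true, by omega, hlt,
      replicate_append_cons_replicate_sublist (by omega) (by omega),
      replicate_append_cons_replicate_sublist (by omega) (by omega)⟩
  -- All `true`s precede that `false`; another `false` has one after it and supplies `p < k - 1`.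
  obtain ⟨v₁, v₂, hv, hv₂⟩ := exists_eq_append_cons_mem_right_of_pair_sublist hft
  have hv₂ := count_pos_iff.mpr hv₂
  have hvsplit : v₁.count true + v₂.count true = k := by simpa [hv] using htrue
  refine ⟨min (v₁.count true) (k - 2), k - 1, by omega, by omega, ?_,
    replicate_append_cons_replicate_sublist (by omega) (by omega)⟩
  rw [hv]
  exact replicate_append_cons_replicate_sublist (by omega) (by omega)

theorem not_injOn_count_false_scatFact {k : ℕ} (hk : 2 ≤ k) {w : List Bool}
    (htrue : w.count true = k) (htf : [true, false] <+ w) (hft : [false, true] <+ w) :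
    ¬ Set.InjOn (count false) (ScatFact k w) := by
  obtain ⟨p, q, hpq, hqk, hp, hq⟩ := exists_two_sublists_count_false_eq_one hk htrue htf hft
  intro hinj
  have hlen (r : ℕ) (hr : r < k) :
      (replicate r true ++ false :: replicate (k - 1 - r) true).length = k := by
    simp only [length_append, length_replicate, length_cons]; omega
  have heq := hinj (mem_scatFact.mpr ⟨hp, hlen p (by omega)⟩) (mem_scatFact.mpr ⟨hq, hlen q hqk⟩)
    (by simp [count_replicate])
  have := congrArg (·[p]?) heq
  simp [getElem?_append_left, hpq] at this

theorem scatfact_min_card_iff_general (k : ℕ) (hk : 3 ≤ k) (w : List Bool)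
    (ha : w.count wa = k) (hb : w.count wb = k) :
    (ScatFact k w).card = k + 1 ↔
      w = List.replicate k wa ++ List.replicate k wb ∨
      w = List.replicate k wb ++ List.replicate k wa := by
  rw [← Finset.card_range (k + 1), ← image_count_false_scatFact ha hb, eq_comm,
    Finset.card_image_iff]
  constructor
  · intro hinj
    by_contra! h
    obtain ⟨htf, hft⟩ := pair_sublists_of_ne_replicate_append_replicate ha hb h.1 h.2
    exact not_injOn_count_false_scatFact (by omega) hb htf hft hinj
  · rintro (rfl | rfl)
    · exact injOn_count_false_scatFact_of_pairwise
        (pairwise_replicate_append_replicate (r := (· ≤ ·)) (by decide) k k)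
    · exact injOn_count_false_scatFact_of_pairwise
        (pairwise_replicate_append_replicate (r := (· ≥ ·)) (by decide) k k)

theorem scatfact_min_card_iff (k : ℕ) (hk : 3 ≤ k) (w : List Bool)
    (hlen : w.length = 2 * k) (ha : w.count wa = k) (hb : w.count wb = k) :
    (ScatFact k w).card = k + 1 ↔
      w = List.replicate k wa ++ List.replicate k wb ∨
      w = List.replicate k wb ++ List.replicate k wa :=
  scatfact_min_card_iff_general k hk w ha hb
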